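/- Let ξ(x) = Σ_{k≥2} γ_k² x^k with γ_k ≥ 0, convergent on [0,1], ξ''(0) > 0, and suppose there exists q_c ∈ (0,1) with (−log(1−q_c) − q_c)/ξ(q_c) ≤ 1/ξ''(0). Then for all sufficiently small ε > 0, setting ξ̃(x) = ξ(x) + ε(x^p − x²) for any fixed p ≥ 3 (with γ_2² > ε so ξ̃ has nonnegative coefficients), one has inf_{q∈(0,1)} (−log(1−q) − q)/ξ̃(q) < 1/ξ̃''(0). -/

import Mathlib

open Real Set

/-!
The point `q_c` itself witnesses the strict inequality. Write `N = -log(1-q_c) - q_c` and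
`c = ξ''(0)`, so that the hypothesis reads `N c ≤ ξ(q_c)`. Replacing `c` by `c - 2ε` lowers the
left side by `2εN`, while the perturbation changes `ξ(q_c)` by `ε(q_c^p - q_c²) > -ε q_c² ≥ -2εN`,
because `-log(1-q) - q ≥ q²/2`.
-/

lemma add_sq_div_two_le_neg_log_one_sub {q : ℝ} (hq0 : 0 ≤ q) (hq1 : q < 1) :
    q + q ^ 2 / 2 ≤ -log (1 - q) := by
  have hlog := hasSum_pow_div_log_of_abs_lt_one (abs_lt.mpr ⟨by linarith, hq1⟩)
  have h := sum_le_hasSum (Finset.range 2) (fun n _ => by positivity) hlog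
  norm_num [Finset.sum_range_succ] at h
  linarith

lemma neg_log_one_sub_sub_pos {q : ℝ} (hq0 : 0 < q) (hq1 : q < 1) :
    0 < -log (1 - q) - q := by
  have := add_sq_div_two_le_neg_log_one_sub hq0.le hq1
  nlinarith

lemma mul_sq_le_tsum_mul_pow {c : ℕ → ℝ} (hc : ∀ k, 0 ≤ c k) (hsum : Summable c) {q : ℝ}
    (hq0 : 0 ≤ q) (hq1 : q ≤ 1) :
    c 0 * q ^ 2 ≤ ∑' k, c k * q ^ (k + 2) := by
  have hnonneg : ∀ k, 0 ≤ c k * q ^ (k + 2) := fun k => mul_nonneg (hc k) (by positivity)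
  have hs : Summable fun k => c k * q ^ (k + 2) :=
    hsum.of_nonneg_of_le hnonneg fun k =>
      mul_le_of_le_one_right (hc k) (pow_le_one₀ hq0 hq1)
  simpa using hs.le_tsum 0 fun k _ => hnonneg k

lemma div_add_mul_sub_lt_one_div_sub {N X c ε s t : ℝ} (hX : 0 < X) (hc : 0 < c)
    (hεc : 2 * ε < c) (hε : 0 < ε) (ht : 0 < t) (hs : s ≤ 2 * N) (hNX : N / X ≤ 1 / c)
    (hD : 0 < X + ε * (t - s)) :
    N / (X + ε * (t - s)) < 1 / (c - 2 * ε) := by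
  rw [div_le_div_iff₀ hX hc] at hNX
  rw [div_lt_div_iff₀ hD (by linarith)]
  nlinarith [mul_pos hε ht, mul_le_mul_of_nonneg_left hs hε.le]

theorem stmt_11_general
    (γ : ℕ → ℝ)
    (hγ2 : 0 < 2 * γ 2 ^ 2)
    (ξ : ℝ → ℝ)
    (hξ : ∀ x : ℝ, ξ x = ∑' k : ℕ, γ (k + 2) ^ 2 * x ^ (k + 2))
    (hsum : Summable fun k : ℕ => γ (k + 2) ^ 2 * (1 : ℝ) ^ (k + 2))
    (p : ℕ)
    (qc : ℝ) (hqc : qc ∈ Ioo (0 : ℝ) 1)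
    (hκ : (-Real.log (1 - qc) - qc) / ξ qc ≤ 1 / (2 * γ 2 ^ 2)) :
    ∃ ε0 > 0, ∀ ε : ℝ, 0 < ε → ε ≤ ε0 → ε < γ 2 ^ 2 →
      sInf ((fun q : ℝ =>
          (-Real.log (1 - q) - q) / (ξ q + ε * (q ^ p - q ^ 2))) '' Ioo (0 : ℝ) 1) <
        1 / (2 * γ 2 ^ 2 - 2 * ε) := by
  have hξ_lb : ∀ q ∈ Ioo (0 : ℝ) 1, γ 2 ^ 2 * q ^ 2 ≤ ξ q := fun q hq => by
    rw [hξ]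
    exact mul_sq_le_tsum_mul_pow (fun k => sq_nonneg _) (by simpa using hsum) hq.1.le hq.2.le
  refine ⟨1, one_pos, fun ε hε _ hεγ => ?_⟩
  have hden : ∀ q ∈ Ioo (0 : ℝ) 1, 0 < ξ q + ε * (q ^ p - q ^ 2) := fun q hq => by
    nlinarith [hξ_lb q hq, mul_pos (sub_pos.mpr hεγ) (pow_pos hq.1 2), mul_pos hε (pow_pos hq.1 p)]
  have hbdd : BddBelow ((fun q : ℝ =>
      (-Real.log (1 - q) - q) / (ξ q + ε * (q ^ p - q ^ 2))) '' Ioo (0 : ℝ) 1) := by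
    refine ⟨0, ?_⟩
    rintro _ ⟨q, hq, rfl⟩
    exact (div_pos (neg_log_one_sub_sub_pos hq.1 hq.2) (hden q hq)).le
  refine (csInf_le hbdd (mem_image_of_mem _ hqc)).trans_lt ?_
  have hξqc : 0 < ξ qc := (mul_pos (by linarith) (pow_pos hqc.1 2)).trans_le (hξ_lb qc hqc)
  have hsq : qc ^ 2 ≤ 2 * (-log (1 - qc) - qc) := by
    linarith [add_sq_div_two_le_neg_log_one_sub hqc.1.le hqc.2]
  exact div_add_mul_sub_lt_one_div_sub hξqc hγ2 (by linarith) hε (pow_pos hqc.1 p) hsq hκ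
    (hden qc hqc)

/-- genericity of `β_c < β_cont` under perturbation. If there is
`q_c ∈ (0,1)` with `κ(q_c) ≤ 1/ξ''(0)`, then for all small `ε > 0` (with
`ε < γ₂²`), the perturbed mixture `ξ̃(x) = ξ(x) + ε(x^p − x²)` satisfies
`inf_{q∈(0,1)} (−log(1−q) − q)/ξ̃(q) < 1/ξ̃''(0) = 1/(ξ''(0) − 2ε)`. -/
theorem stmt_11
    (γ : ℕ → ℝ) (hγ : ∀ k, 0 ≤ γ k)
    (hγ2 : 0 < 2 * γ 2 ^ 2)
    (ξ : ℝ → ℝ)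
    (hξ : ∀ x : ℝ, ξ x = ∑' k : ℕ, γ (k + 2) ^ 2 * x ^ (k + 2))
    (hsum : Summable fun k : ℕ => γ (k + 2) ^ 2 * (1 : ℝ) ^ (k + 2))
    (p : ℕ) (hp : 3 ≤ p)
    (qc : ℝ) (hqc : qc ∈ Ioo (0 : ℝ) 1)
    (hκ : (-Real.log (1 - qc) - qc) / ξ qc ≤ 1 / (2 * γ 2 ^ 2)) :
    ∃ ε0 > 0, ∀ ε : ℝ, 0 < ε → ε ≤ ε0 → ε < γ 2 ^ 2 →
      sInf ((fun q : ℝ =>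
          (-Real.log (1 - q) - q) / (ξ q + ε * (q ^ p - q ^ 2))) '' Ioo (0 : ℝ) 1) <
        1 / (2 * γ 2 ^ 2 - 2 * ε) :=
  stmt_11_general γ hγ2 ξ hξ hsum p qc hqc hκ
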